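/- arXiv:1505.02043 — 6 statements merged into one kernel-verified Lean document; each statement's English description precedes it below -/
import Mathlib

section
/- Define θ on the algebraic crossed product A ⋊_α ℤ_n by sending a_i λ_i to the n×n matrix whose (k,l) entry is ξ^{-il} P_{l-k}(a_i) (indices mod n). Then θ is multiplicative: θ((a_i λ_i)(b_j λ_j)) = θ(a_i λ_i) θ(b_j λ_j), where (a_i λ_i)(b_j λ_j) = a_i α^i(b_j) λ_{i+j}. -/
noncomputable def chiAux (n : ℕ) (ξ : ℂ) (m : ZMod n) : ℂ := ξ ^ m.val

lemma sum_range_zmod (n : ℕ) [NeZero n] {M : Type*} [AddCommMonoid M] (f : ℕ → M) :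
    ∑ p ∈ Finset.range n, f p = ∑ m : ZMod n, f m.val := by
  refine Finset.sum_nbij' (fun p => ((p : ZMod n))) (fun m => m.val) ?_ ?_ ?_ ?_ ?_
  · intro p _; exact Finset.mem_univ _
  · intro m _; exact Finset.mem_range.mpr (ZMod.val_lt m)
  · intro p hp; exact ZMod.val_cast_of_lt (Finset.mem_range.mp hp)
  · intro m _; exact ZMod.natCast_rightInverse m
  · intro p hp; rw [ZMod.val_natCast, Nat.mod_eq_of_lt (Finset.mem_range.mp hp)]

lemma pow_val_mod {n : ℕ} {ξ : ℂ} (hξ1 : ξ ^ n = 1) (m : ℕ) : ξ ^ (m % n) = ξ ^ m := by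
  conv_rhs => rw [← Nat.div_add_mod m n]
  rw [pow_add, pow_mul, hξ1, one_pow, one_mul]

lemma chi_add {n : ℕ} [NeZero n] {ξ : ℂ} (hξ1 : ξ ^ n = 1) (x y : ZMod n) :
    chiAux n ξ (x + y) = chiAux n ξ x * chiAux n ξ y := by
  unfold chiAux
  rw [ZMod.val_add, pow_val_mod hξ1, pow_add]

lemma chi_zero {n : ℕ} [NeZero n] (ξ : ℂ) : chiAux n ξ 0 = 1 := by
  simp [chiAux]

lemma chi_pow {n : ℕ} [NeZero n] {ξ : ℂ} (hξ1 : ξ ^ n = 1) (x y : ZMod n) :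
    ξ ^ (x.val * y.val) = chiAux n ξ (x * y) := by
  unfold chiAux
  rw [ZMod.val_mul, pow_val_mod hξ1]

lemma chi_inv {n : ℕ} [NeZero n] {ξ : ℂ} (hξ1 : ξ ^ n = 1) (x : ZMod n) :
    (chiAux n ξ x)⁻¹ = chiAux n ξ (-x) := by
  refine inv_eq_of_mul_eq_one_right ?_
  rw [← chi_add hξ1, add_neg_cancel, chi_zero]

lemma chi_orth {n : ℕ} [NeZero n] {ξ : ℂ} (hξ : IsPrimitiveRoot ξ n) (s : ZMod n) :
    ∑ m : ZMod n, chiAux n ξ (m * s) = if s = 0 then (n : ℂ) else 0 := by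
  have hξ1 : ξ ^ n = 1 := hξ.pow_eq_one
  have h1 : ∀ m : ZMod n, chiAux n ξ (m * s) = (ξ ^ s.val) ^ m.val := by
    intro m
    rw [← chi_pow hξ1, ← pow_mul, Nat.mul_comm]
  simp only [h1]
  rw [← sum_range_zmod]
  by_cases hs : s = 0
  · subst hs; simp
  · rw [if_neg hs]
    have hz : ξ ^ s.val ≠ 1 := by
      intro h
      have hdvd := (hξ.pow_eq_one_iff_dvd s.val).mp h
      have hlt := ZMod.val_lt s
      have h0 : s.val = 0 := Nat.eq_zero_of_dvd_of_lt hdvd hlt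
      exact hs ((ZMod.val_eq_zero s).mp h0)
    rw [geom_sum_eq hz]
    have h2 : (ξ ^ s.val) ^ n = 1 := by rw [← pow_mul, Nat.mul_comm, pow_mul, hξ1, one_pow]
    rw [h2, sub_self, zero_div]

section Perm

variable {ι M : Type*} [Fintype ι] [AddCommMonoid M]

lemma mi3 (f : ι → ι → ι → M) :
    ∑ a, ∑ b, ∑ c, f a b c = ∑ b, ∑ c, ∑ a, f a b c := by
  rw [Finset.sum_comm]
  exact Finset.sum_congr rfl fun b _ => Finset.sum_comm

lemma mi4 (f : ι → ι → ι → ι → M) :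
    ∑ a, ∑ b, ∑ c, ∑ d, f a b c d = ∑ b, ∑ c, ∑ d, ∑ a, f a b c d := by
  rw [Finset.sum_comm]
  exact Finset.sum_congr rfl fun b _ => mi3 _

lemma mi5 (f : ι → ι → ι → ι → ι → M) :
    ∑ a, ∑ b, ∑ c, ∑ d, ∑ e, f a b c d e = ∑ b, ∑ c, ∑ d, ∑ e, ∑ a, f a b c d e := by
  rw [Finset.sum_comm]
  exact Finset.sum_congr rfl fun b _ => mi4 _

lemma sum5_perm (f : ι → ι → ι → ι → ι → M) :
    ∑ m, ∑ r, ∑ q, ∑ j, ∑ p, f m r q j p = ∑ r, ∑ j, ∑ p, ∑ q, ∑ m, f m r q j p := by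
  rw [mi5]
  exact Finset.sum_congr rfl fun r _ => mi3 fun q j p => ∑ m, f m r q j p

end Perm

theorem stmt_8 {A : Type*} [Ring A] [Algebra ℂ A]
    (n : ℕ) [NeZero n] (hn : 2 ≤ n)
    (α : A ≃ₐ[ℂ] A) (hα : α ^ n = 1)
    (ξ : ℂ) (hξ : IsPrimitiveRoot ξ n)
    (P : ZMod n → A → A)
    (hP : ∀ k x, P k x = (n : ℂ)⁻¹ • ∑ p ∈ Finset.range n, (ξ ^ (k.val * p))⁻¹ • (α ^ p) x)
    (θ : (ZMod n → A) → Matrix (ZMod n) (ZMod n) A)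
    (hθ : ∀ a k l, θ a k l = ∑ i : ZMod n, (ξ ^ (i.val * l.val))⁻¹ • P (l - k) (a i))
    (a b : ZMod n → A) :
    θ (fun m => ∑ i : ZMod n, a i * (α ^ i.val) (b (m - i))) = θ a * θ b := by
  have hξ1 : ξ ^ n = 1 := hξ.pow_eq_one
  have hn0 : (n : ℂ) ≠ 0 := Nat.cast_ne_zero.mpr (NeZero.ne n)
  have hαmod : ∀ m : ℕ, α ^ (m % n) = α ^ m := by
    intro m
    conv_rhs => rw [← Nat.div_add_mod m n]
    rw [pow_add, pow_mul, hα, one_pow, one_mul]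
  have hcomp : ∀ (x y : ZMod n) (v : A), (α ^ x.val) ((α ^ y.val) v) = (α ^ (x + y).val) v := by
    intro x y v
    rw [ZMod.val_add, hαmod, pow_add]
    rfl
  ext k l
  rw [Matrix.mul_apply]
  simp only [hθ, hP, sum_range_zmod n, chi_pow hξ1, chi_inv hξ1]
  simp only [map_sum, map_mul, hcomp, Finset.smul_sum, Finset.mul_sum, Finset.sum_mul,
    smul_mul_assoc, mul_smul_comm, smul_smul]
  -- Left side:  ∑ i, ∑ p, ∑ j, (χ(-(i l)) * (n⁻¹ * χ(-((l-k) p)))) • (αᵖ(a j) * α^{p+j}(b (i-j)))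
  -- Right side: ∑ m, ∑ r, ∑ q, ∑ j, ∑ p,
  --   (χ(-(r l)) * (n⁻¹ * χ(-((l-m) q))) * (χ(-(j m)) * (n⁻¹ * χ(-((m-k) p))))) • (αᵖ(a j) * α^q(b r))
  have hL :
      (∑ i : ZMod n, ∑ p : ZMod n, ∑ j : ZMod n,
        (chiAux n ξ (-(i * l)) * ((n : ℂ)⁻¹ * chiAux n ξ (-((l - k) * p)))) •
          ((α ^ p.val) (a j) * (α ^ (p + j).val) (b (i - j)))) =
      ∑ r : ZMod n, ∑ j : ZMod n, ∑ p : ZMod n,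
        ((n : ℂ)⁻¹ * chiAux n ξ (k * p - r * l - l * j - l * p)) •
          ((α ^ p.val) (a j) * (α ^ (p + j).val) (b r)) := by
    rw [mi3, mi3]
    conv_rhs => rw [Finset.sum_comm]
    refine Finset.sum_congr rfl fun j _ => ?_
    refine Fintype.sum_equiv (Equiv.subRight j) _ _ fun i => ?_
    simp only [Equiv.subRight_apply]
    refine Finset.sum_congr rfl fun p _ => ?_
    congr 1
    rw [show -((l - k) * p) = k * p + -(l * p) by ring,
      show k * p - (i - j) * l - l * j - l * p = -(i * l) + (k * p + -(l * p)) by ring]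
    simp only [chi_add hξ1]
    ring
  have hR :
      (∑ m : ZMod n, ∑ r : ZMod n, ∑ q : ZMod n, ∑ j : ZMod n, ∑ p : ZMod n,
        (chiAux n ξ (-(r * l)) * ((n : ℂ)⁻¹ * chiAux n ξ (-((l - m) * q))) *
          (chiAux n ξ (-(j * m)) * ((n : ℂ)⁻¹ * chiAux n ξ (-((m - k) * p))))) •
          ((α ^ p.val) (a j) * (α ^ q.val) (b r))) =
      ∑ r : ZMod n, ∑ j : ZMod n, ∑ p : ZMod n,
        ((n : ℂ)⁻¹ * chiAux n ξ (k * p - r * l - l * j - l * p)) •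
          ((α ^ p.val) (a j) * (α ^ (p + j).val) (b r)) := by
    rw [sum5_perm]
    refine Finset.sum_congr rfl fun r _ => Finset.sum_congr rfl fun j _ =>
      Finset.sum_congr rfl fun p _ => ?_
    have hco : ∀ q m : ZMod n,
        chiAux n ξ (-(r * l)) * ((n : ℂ)⁻¹ * chiAux n ξ (-((l - m) * q))) *
          (chiAux n ξ (-(j * m)) * ((n : ℂ)⁻¹ * chiAux n ξ (-((m - k) * p))))
        = chiAux n ξ (m * (q - (j + p))) *
            (((n : ℂ)⁻¹ * (n : ℂ)⁻¹) * chiAux n ξ (k * p - r * l - l * q)) := by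
      intro q m
      rw [show -((l - m) * q) = m * q + -(l * q) by ring,
        show -(j * m) = -(m * j) by ring,
        show -((m - k) * p) = -(m * p) + k * p by ring,
        show m * (q - (j + p)) = m * q + (-(m * j) + -(m * p)) by ring,
        show k * p - r * l - l * q = -(r * l) + (-(l * q) + k * p) by ring]
      simp only [chi_add hξ1]
      ring
    simp only [hco, mul_smul]
    simp only [← Finset.sum_smul, chi_orth hξ, sub_eq_zero]
    simp only [ite_smul, zero_smul, Finset.sum_ite_eq', Finset.mem_univ, if_true]
    rw [show k * p - r * l - l * (j + p) = k * p - r * l - l * j - l * p by ring, add_comm j p,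
      smul_smul, smul_smul, smul_smul, smul_smul]
    congr 1
    field_simp
  exact hL.trans hR.symm
end

section
/- The map θ : A ⋊_α ℤ_n → M_n(A), θ(∑_i a_i λ_i)_{kl} = ∑_i ξ^{-il} P_{l-k}(a_i), is injective: each coefficient can be recovered by a_i = (1/n) ∑_{k,l=0}^{n-1} ξ^{li} θ(∑_j a_j λ_j)_{kl}. -/
lemma aux_sum_zmod {n : ℕ} [NeZero n] (f : ℕ → ℂ) :
    ∑ l : ZMod n, f l.val = ∑ l ∈ Finset.range n, f l := by
  apply Finset.sum_nbij' (fun l : ZMod n => l.val) (fun p => (p : ZMod n))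
  · intro l _; exact Finset.mem_range.mpr (ZMod.val_lt l)
  · intro p _; exact Finset.mem_univ _
  · intro l _; exact ZMod.natCast_zmod_val l
  · intro p hp; exact ZMod.val_natCast_of_lt (Finset.mem_range.mp hp)
  · intro l _; rfl

lemma aux_geom {n : ℕ} (w : ℂ) (hw : w ^ n = 1) :
    ∑ l ∈ Finset.range n, w ^ l = if w = 1 then (n : ℂ) else 0 := by
  split_ifs with h
  · simp [h]
  · rw [geom_sum_eq h, hw]; simp

theorem stmt_9 {A : Type*} [Ring A] [Algebra ℂ A]
    (n : ℕ) [NeZero n] (hn : 2 ≤ n)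
    (α : A ≃ₐ[ℂ] A) (hα : α ^ n = 1)
    (ξ : ℂ) (hξ : IsPrimitiveRoot ξ n)
    (P : ZMod n → A → A)
    (hP : ∀ k x, P k x = (n : ℂ)⁻¹ • ∑ p ∈ Finset.range n, (ξ ^ (k.val * p))⁻¹ • (α ^ p) x)
    (θ : (ZMod n → A) → Matrix (ZMod n) (ZMod n) A)
    (hθ : ∀ a k l, θ a k l = ∑ i : ZMod n, (ξ ^ (i.val * l.val))⁻¹ • P (l - k) (a i)) :
    (∀ (a : ZMod n → A) (i : ZMod n),
        (n : ℂ)⁻¹ • ∑ k : ZMod n, ∑ l : ZMod n, ξ ^ (l.val * i.val) • θ a k l = a i) ∧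
      Function.Injective θ := by
  have hnpos : 0 < n := Nat.lt_of_lt_of_le two_pos hn
  have hnC : (n : ℂ) ≠ 0 := Nat.cast_ne_zero.mpr hnpos.ne'
  have hξn : ξ ^ n = 1 := hξ.pow_eq_one
  have hξ0 : ξ ≠ 0 := hξ.ne_zero hnpos.ne'
  -- key scalar sum 1
  have key1 : ∀ p ∈ Finset.range n,
      (∑ m : ZMod n, (ξ ^ (m.val * p))⁻¹) = if p = 0 then (n : ℂ) else 0 := by
    intro p hp
    have : ∀ m : ZMod n, (ξ ^ (m.val * p))⁻¹ = ((ξ⁻¹) ^ p) ^ m.val := by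
      intro m
      rw [← inv_pow, ← pow_mul, Nat.mul_comm]
    simp_rw [this]
    rw [aux_sum_zmod (fun l => ((ξ⁻¹) ^ p) ^ l), aux_geom _ (by
      rw [← pow_mul, Nat.mul_comm, pow_mul, inv_pow, hξn]; simp)]
    congr 1
    rw [eq_iff_iff]
    constructor
    · intro h
      have h' : ξ ^ p = 1 := by
        have := congrArg (fun z => z * ξ ^ p) h
        simpa [inv_pow, inv_mul_cancel₀ (pow_ne_zero p hξ0)] using this.symm
      have := (hξ.pow_eq_one_iff_dvd p).mp h'
      exact Nat.eq_zero_of_dvd_of_lt this (Finset.mem_range.mp hp)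
    · rintro rfl; simp
  -- key scalar sum 2
  have key2 : ∀ i j : ZMod n,
      (∑ l : ZMod n, ξ ^ (l.val * i.val) * (ξ ^ (j.val * l.val))⁻¹)
        = if j = i then (n : ℂ) else 0 := by
    intro i j
    have : ∀ l : ZMod n, ξ ^ (l.val * i.val) * (ξ ^ (j.val * l.val))⁻¹
        = (ξ ^ i.val * (ξ⁻¹) ^ j.val) ^ l.val := by
      intro l
      rw [mul_pow, ← pow_mul, ← pow_mul, inv_pow, Nat.mul_comm i.val l.val]
    simp_rw [this]
    rw [aux_sum_zmod (fun l => (ξ ^ i.val * (ξ⁻¹) ^ j.val) ^ l), aux_geom _ (by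
      rw [mul_pow, ← pow_mul, Nat.mul_comm, pow_mul, hξn, ← pow_mul,
        Nat.mul_comm, pow_mul, inv_pow, hξn]; simp)]
    congr 1
    rw [eq_iff_iff]
    constructor
    · intro h
      have h' : ξ ^ i.val = ξ ^ j.val := by
        have := congrArg (fun z => z * ξ ^ j.val) h
        simpa [inv_pow, mul_assoc, inv_mul_cancel₀ (pow_ne_zero j.val hξ0)] using this
      have := hξ.pow_inj (ZMod.val_lt i) (ZMod.val_lt j) h'
      exact (ZMod.val_injective n this).symm
    · rintro rfl; simp [inv_pow, mul_inv_cancel₀ (pow_ne_zero j.val hξ0)]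
  -- Step A: sum of P over all of ZMod n is identity
  have sumP : ∀ x : A, ∑ m : ZMod n, P m x = x := by
    intro x
    simp_rw [hP, ← Finset.smul_sum]
    rw [Finset.sum_comm]
    have : ∀ p ∈ Finset.range n,
        (∑ m : ZMod n, (ξ ^ (m.val * p))⁻¹ • (α ^ p) x)
          = (if p = 0 then (n : ℂ) else 0) • (α ^ p) x := by
      intro p hp
      rw [← Finset.sum_smul, key1 p hp]
    rw [Finset.sum_congr rfl this,
      Finset.sum_eq_single_of_mem 0 (Finset.mem_range.mpr hnpos)
        (by intro p _ hp0; simp [hp0])]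
    simp [smul_smul, inv_mul_cancel₀ hnC]
  -- Step B: column sums of θ
  have sumCol : ∀ (a : ZMod n → A) (l : ZMod n),
      ∑ k : ZMod n, θ a k l = ∑ j : ZMod n, (ξ ^ (j.val * l.val))⁻¹ • a j := by
    intro a l
    simp_rw [hθ]
    rw [Finset.sum_comm]
    refine Finset.sum_congr rfl fun j _ => ?_
    rw [← Finset.smul_sum]
    congr 1
    exact (Fintype.sum_equiv (Equiv.subLeft l) _ (fun m => P m (a j))
      (fun k => rfl)).trans (sumP (a j))
  -- recovery formula
  have formula : ∀ (a : ZMod n → A) (i : ZMod n),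
      (n : ℂ)⁻¹ • ∑ k : ZMod n, ∑ l : ZMod n, ξ ^ (l.val * i.val) • θ a k l = a i := by
    intro a i
    rw [Finset.sum_comm]
    have step : ∀ l : ZMod n,
        (∑ k : ZMod n, ξ ^ (l.val * i.val) • θ a k l)
          = ∑ j : ZMod n, (ξ ^ (l.val * i.val) * (ξ ^ (j.val * l.val))⁻¹) • a j := by
      intro l
      rw [← Finset.smul_sum, sumCol a l, Finset.smul_sum]
      simp_rw [smul_smul]
    simp_rw [step]
    rw [Finset.sum_comm]
    have : ∀ j : ZMod n,
        (∑ l : ZMod n, (ξ ^ (l.val * i.val) * (ξ ^ (j.val * l.val))⁻¹) • a j)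
          = (if j = i then (n : ℂ) else 0) • a j := by
      intro j
      rw [← Finset.sum_smul, key2 i j]
    simp_rw [this]
    rw [Finset.sum_eq_single_of_mem i (Finset.mem_univ i)
      (by intro j _ hj; simp [hj])]
    simp [smul_smul, inv_mul_cancel₀ hnC]
  refine ⟨formula, ?_⟩
  intro a b h
  funext i
  rw [← formula a i, ← formula b i, h]
end

section
/- The image of θ is exactly the set of matrices (x_{kl}) ∈ M_n(A) with x_{kl} ∈ A_{l-k mod n} for all k, l; i.e., θ identifies A ⋊_α ℤ_n with the subalgebra of M_n(A) whose (k,l) entry lies in the eigenspace A_{l-k}. -/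
theorem stmt_10 {A : Type*} [Ring A] [Algebra ℂ A]
    (n : ℕ) [NeZero n] (hn : 2 ≤ n)
    (α : A ≃ₐ[ℂ] A) (hα : α ^ n = 1)
    (ξ : ℂ) (hξ : IsPrimitiveRoot ξ n)
    (Ak : ZMod n → Set A) (hAk : ∀ k, Ak k = {x : A | α x = ξ ^ k.val • x})
    (P : ZMod n → A → A)
    (hP : ∀ k x, P k x = (n : ℂ)⁻¹ • ∑ p ∈ Finset.range n, (ξ ^ (k.val * p))⁻¹ • (α ^ p) x)
    (θ : (ZMod n → A) → Matrix (ZMod n) (ZMod n) A)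
    (hθ : ∀ a k l, θ a k l = ∑ i : ZMod n, (ξ ^ (i.val * l.val))⁻¹ • P (l - k) (a i)) :
    Set.range θ = {M : Matrix (ZMod n) (ZMod n) A | ∀ k l, M k l ∈ Ak (l - k)} := by
  have hn0 : (n : ℂ) ≠ 0 := Nat.cast_ne_zero.mpr (NeZero.ne n)
  have hξ0 : ξ ≠ 0 := hξ.ne_zero (NeZero.ne n)
  have hξn : ξ ^ n = 1 := hξ.pow_eq_one
  have hαn : ∀ x : A, (α ^ n) x = x := by rw [hα]; intro x; rfl
  -- sum of powers of an n-th root of unity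
  have hsum : ∀ c : ℂ, c ^ n = 1 →
      ∑ p ∈ Finset.range n, c ^ p = if c = 1 then (n : ℂ) else 0 := by
    intro c hc
    by_cases h1 : c = 1
    · simp [h1]
    · rw [if_neg h1, geom_sum_eq h1, hc, sub_self, zero_div]
  have hpowinj : ∀ m d : ZMod n, ξ ^ m.val = ξ ^ d.val → m = d := fun m d h =>
    ZMod.val_injective n (hξ.pow_inj m.val_lt d.val_lt h)
  -- the quotient of two eigenvalues is an n-th root of unity
  have hc1 : ∀ u v : ZMod n, (ξ ^ u.val * (ξ ^ v.val)⁻¹) ^ n = 1 := by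
    intro u v
    rw [mul_pow, inv_pow, ← pow_mul, ← pow_mul, mul_comm u.val n, mul_comm v.val n,
      pow_mul, pow_mul, hξn, one_pow, one_pow, inv_one, mul_one]
  have hceq : ∀ u v : ZMod n, ξ ^ u.val * (ξ ^ v.val)⁻¹ = 1 ↔ u = v := by
    intro u v
    constructor
    · intro h
      refine hpowinj u v ?_
      field_simp at h
      exact h
    · intro h
      rw [h, mul_inv_cancel₀ (pow_ne_zero _ hξ0)]
  -- iterated action on eigenvectors
  have hiter : ∀ (m : ZMod n) (x : A), α x = ξ ^ m.val • x →
      ∀ p : ℕ, (α ^ p) x = (ξ ^ m.val) ^ p • x := by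
    intro m x hx p
    induction p with
    | zero => simp
    | succ p ih =>
      rw [pow_succ', AlgEquiv.mul_apply, ih, map_smul, hx, smul_smul, pow_succ]
  -- P d is the projection onto the eigenspace A_d
  have hproj : ∀ (d m : ZMod n) (x : A), α x = ξ ^ m.val • x →
      P d x = if d = m then x else 0 := by
    intro d m x hx
    rw [hP]
    have h1 : ∀ p ∈ Finset.range n,
        (ξ ^ (d.val * p))⁻¹ • (α ^ p) x = ((ξ ^ m.val * (ξ ^ d.val)⁻¹) ^ p) • x := by
      intro p _
      rw [hiter m x hx p, smul_smul, pow_mul, mul_pow, inv_pow, mul_comm]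
    rw [Finset.sum_congr rfl h1, ← Finset.sum_smul, hsum _ (hc1 m d), smul_smul]
    by_cases hdm : d = m
    · rw [if_pos ((hceq m d).mpr hdm.symm), if_pos hdm, inv_mul_cancel₀ hn0, one_smul]
    · rw [if_neg (fun h => hdm ((hceq m d).mp h).symm), if_neg hdm, mul_zero, zero_smul]
  -- equivariance of P
  have hequiv : ∀ (d : ZMod n) (x : A), α (P d x) = ξ ^ d.val • P d x := by
    intro d x
    have hgn : (ξ ^ (d.val * n))⁻¹ • (α ^ n) x = (ξ ^ (d.val * 0))⁻¹ • (α ^ 0) x := by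
      rw [hαn, mul_comm, pow_mul, hξn, one_pow]; simp
    have hshift : ∑ p ∈ Finset.range n, (ξ ^ (d.val * (p + 1)))⁻¹ • (α ^ (p + 1)) x
        = ∑ p ∈ Finset.range n, (ξ ^ (d.val * p))⁻¹ • (α ^ p) x := by
      have h1 := Finset.sum_range_succ' (fun p => (ξ ^ (d.val * p))⁻¹ • (α ^ p) x) n
      have h2 := Finset.sum_range_succ (fun p => (ξ ^ (d.val * p))⁻¹ • (α ^ p) x) n
      rw [h2, hgn] at h1
      exact add_right_cancel h1.symm
    rw [hP, map_smul, map_sum, smul_comm]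
    congr 1
    rw [← hshift, Finset.smul_sum]
    refine Finset.sum_congr rfl fun p _ => ?_
    have hsc : (ξ ^ (d.val * (p + 1)))⁻¹ = (ξ ^ d.val)⁻¹ * (ξ ^ (d.val * p))⁻¹ := by
      rw [mul_add, mul_one, pow_add, mul_inv, mul_comm]
    rw [map_smul, hsc, smul_smul, ← mul_assoc,
      mul_inv_cancel₀ (pow_ne_zero _ hξ0), one_mul]
    congr 1
    rw [pow_succ', AlgEquiv.mul_apply]
  -- P is linear
  have hPlin : ∀ d : ZMod n, ∃ f : A →ₗ[ℂ] A, ∀ x, P d x = f x := by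
    intro d
    refine ⟨(n : ℂ)⁻¹ • ∑ p ∈ Finset.range n, (ξ ^ (d.val * p))⁻¹ • (α ^ p).toLinearMap,
      fun x => ?_⟩
    rw [hP]
    simp [LinearMap.sum_apply]
  have hzsum : ∀ F : ℕ → ℂ, ∑ i : ZMod n, F i.val = ∑ p ∈ Finset.range n, F p := by
    obtain ⟨m, rfl⟩ := Nat.exists_eq_succ_of_ne_zero (NeZero.ne n)
    exact fun F => Fin.sum_univ_eq_sum_range (fun p => F p) (m + 1)
  ext M
  constructor
  · rintro ⟨a, rfl⟩ k l
    rw [hAk]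
    show α (θ a k l) = ξ ^ (l - k).val • θ a k l
    rw [hθ, map_sum, Finset.smul_sum]
    refine Finset.sum_congr rfl fun i _ => ?_
    rw [map_smul, hequiv, smul_comm]
  · intro hM
    have hM' : ∀ k l, α (M k l) = ξ ^ (l - k).val • M k l := by
      intro k l
      have := hM k l
      rwa [hAk] at this
    set b : ZMod n → A := fun m => ∑ k' : ZMod n, M k' m with hbdef
    refine ⟨fun i => (n : ℂ)⁻¹ • ∑ m : ZMod n, ξ ^ (i.val * m.val) • b m, ?_⟩
    ext k l
    obtain ⟨f, hf⟩ := hPlin (l - k)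
    rw [hθ]
    simp only [hf]
    have key : ∑ i : ZMod n,
        (ξ ^ (i.val * l.val))⁻¹ • ((n : ℂ)⁻¹ • ∑ m : ZMod n, ξ ^ (i.val * m.val) • b m)
        = b l := by
      have h1 : ∀ i : ZMod n,
          (ξ ^ (i.val * l.val))⁻¹ • ((n : ℂ)⁻¹ • ∑ m : ZMod n, ξ ^ (i.val * m.val) • b m)
          = ∑ m : ZMod n, ((n : ℂ)⁻¹ * (ξ ^ m.val * (ξ ^ l.val)⁻¹) ^ i.val) • b m := by
        intro i
        rw [smul_smul, Finset.smul_sum]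
        refine Finset.sum_congr rfl fun m _ => ?_
        rw [smul_smul]
        congr 1
        rw [pow_mul, pow_mul, mul_pow, inv_pow]
        ring
      rw [Finset.sum_congr rfl (fun i _ => h1 i), Finset.sum_comm]
      have h2 : ∀ m : ZMod n,
          ∑ i : ZMod n, ((n : ℂ)⁻¹ * (ξ ^ m.val * (ξ ^ l.val)⁻¹) ^ i.val) • b m
          = (if m = l then (1 : ℂ) else 0) • b m := by
        intro m
        rw [← Finset.sum_smul]
        congr 1
        rw [← Finset.mul_sum, hzsum (fun p => (ξ ^ m.val * (ξ ^ l.val)⁻¹) ^ p),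
          hsum _ (hc1 m l)]
        by_cases h : m = l
        · rw [if_pos ((hceq m l).mpr h), if_pos h, inv_mul_cancel₀ hn0]
        · rw [if_neg (fun hh => h ((hceq m l).mp hh)), if_neg h, mul_zero]
      rw [Finset.sum_congr rfl (fun m _ => h2 m)]
      simp [ite_smul]
    have hc : ∀ i : ZMod n,
        (ξ ^ (i.val * l.val))⁻¹ • f ((n : ℂ)⁻¹ • ∑ m : ZMod n, ξ ^ (i.val * m.val) • b m)
        = f ((ξ ^ (i.val * l.val))⁻¹ • ((n : ℂ)⁻¹ • ∑ m : ZMod n, ξ ^ (i.val * m.val) • b m)) :=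
      fun i => (map_smul f _ _).symm
    rw [Finset.sum_congr rfl (fun i _ => hc i), ← map_sum, key]
    have hfb : f (b l) = ∑ k' : ZMod n, (if k' = k then M k' l else 0) := by
      rw [hbdef]
      simp only
      rw [map_sum]
      refine Finset.sum_congr rfl fun k' _ => ?_
      rw [← hf, hproj (l - k) (l - k') (M k' l) (hM' k' l)]
      by_cases h : k' = k
      · rw [if_pos (by rw [h]), if_pos h]
      · rw [if_neg (fun hh => h (sub_right_injective hh).symm), if_neg h]
    rw [hfb, Finset.sum_ite_eq' Finset.univ k (fun k' => M k' l)]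
    simp
end

section
/- The map θ is a *-homomorphism: θ((∑ a_i λ_i)*) = θ(∑ a_i λ_i)*, where the adjoint in the crossed product is (a_i λ_i)* = α^{-i}(a_i*) λ_{-i} and the adjoint in M_n(A) is the conjugate transpose. -/
/-!
Write `ψ` for the character `j ↦ ξ ^ j` of `ZMod n`. Since `α ^ n = 1`, the projection `P_k` is
an eigenprojection of `α`: `P_k (α ^ j x) = ψ (k j) • P_k x`, and since `α` commutes with `star`
and `ψ` is unitary, `star (P_k x) = P_{-k} (star x)`. Entrywise, the `(k, l)` entry of
`θ((∑ aᵢ λᵢ)*)` becomes, after these two rules and the substitution `i ↦ -i`,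
`∑ᵢ ψ (i k) • P_{l-k} (star aᵢ)`, which is the conjugate of the `(l, k)` entry of `θ(∑ aᵢ λᵢ)`.
-/

open Finset
open scoped Matrix

theorem Finset.sum_range_eq_sum_zmod_val {M : Type*} [AddCommMonoid M] (n : ℕ) [NeZero n]
    (f : ℕ → M) : ∑ p ∈ range n, f p = ∑ p : ZMod n, f p.val :=
  Finset.sum_nbij' (↑) ZMod.val (fun _ _ => mem_univ _)
    (fun q _ => mem_range.mpr (ZMod.val_lt q))
    (fun _ hp => ZMod.val_cast_of_lt (mem_range.mp hp)) (fun q _ => ZMod.natCast_zmod_val q)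
    (fun _ hp => by rw [ZMod.val_cast_of_lt (mem_range.mp hp)])

theorem pow_zmod_val_add {M : Type*} [Monoid M] {n : ℕ} [NeZero n] {x : M} (hx : x ^ n = 1)
    (a b : ZMod n) : x ^ (a + b).val = x ^ a.val * x ^ b.val := by
  rw [ZMod.val_add, ← pow_eq_pow_mod _ hx, pow_add]

theorem AddChar.zmodChar_neg_mul {C : Type*} [DivisionCommMonoid C] {n : ℕ} [NeZero n] {ζ : C}
    (hζ : ζ ^ n = 1) (a b : ZMod n) : zmodChar n hζ (-(a * b)) = (ζ ^ (a.val * b.val))⁻¹ := by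
  rw [map_neg_eq_inv, ← zmodChar_apply' hζ]
  push_cast [ZMod.natCast_zmod_val]
  rfl

theorem AlgEquiv.pow_apply_star {R A : Type*} [CommSemiring R] [Semiring A] [Algebra R A] [Star A]
    {α : A ≃ₐ[R] A} (hstar : ∀ x : A, α (star x) = star (α x)) (m : ℕ) (x : A) :
    (α ^ m) (star x) = star ((α ^ m) x) := by
  rw [AlgEquiv.coe_pow]
  exact Function.Commute.iterate_left (g := star) hstar m x

section FourierProjection

variable {A : Type*} [Ring A] [Algebra ℂ A] {n : ℕ} [NeZero n]

/-- The projection `P_k` of the paper, summed over `ZMod n`, with `ψ` in place of `j ↦ ξ ^ j`. -/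
noncomputable def fourierProj (α : A ≃ₐ[ℂ] A) (ψ : AddChar (ZMod n) ℂ) (k : ZMod n) (x : A) : A :=
  (n : ℂ)⁻¹ • ∑ p : ZMod n, ψ (-(k * p)) • (α ^ p.val) x

/-- The map `θ` of the paper, on the coefficient family `i ↦ aᵢ` of `∑ aᵢ λᵢ`. -/
noncomputable def crossedToMatrix (α : A ≃ₐ[ℂ] A) (ψ : AddChar (ZMod n) ℂ) (a : ZMod n → A) :
    Matrix (ZMod n) (ZMod n) A :=
  Matrix.of fun k l => ∑ i, ψ (-(i * l)) • fourierProj α ψ (l - k) (a i)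

variable {α : A ≃ₐ[ℂ] A} (ψ : AddChar (ZMod n) ℂ)

theorem fourierProj_pow_val_apply (hα : α ^ n = 1) (k j : ZMod n) (x : A) :
    fourierProj α ψ k ((α ^ j.val) x) = ψ (k * j) • fourierProj α ψ k x := by
  rw [fourierProj, fourierProj, smul_comm (ψ (k * j))]
  congr 1
  rw [smul_sum]
  apply Fintype.sum_equiv (Equiv.addRight j)
  intro p
  rw [Equiv.coe_addRight, pow_zmod_val_add hα, AlgEquiv.mul_apply, smul_smul,
    ← AddChar.map_add_eq_mul]
  ring_nf

variable [StarRing A] [StarModule ℂ A]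

theorem star_fourierProj (hstar : ∀ x : A, α (star x) = star (α x)) (k : ZMod n) (x : A) :
    star (fourierProj α ψ k x) = fourierProj α ψ (-k) (star x) := by
  simp only [fourierProj, star_smul, star_sum, star_inv₀, star_natCast,
    AlgEquiv.pow_apply_star hstar, Complex.star_def, ← AddChar.map_neg_eq_conj, neg_mul]

theorem crossedToMatrix_star (hα : α ^ n = 1) (hstar : ∀ x : A, α (star x) = star (α x))
    (a : ZMod n → A) :
    crossedToMatrix α ψ (fun j => (α ^ j.val) (star (a (-j)))) = (crossedToMatrix α ψ a)ᴴ := by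
  ext k l
  simp only [crossedToMatrix, Matrix.conjTranspose_apply, Matrix.of_apply, star_sum, star_smul,
    star_fourierProj ψ hstar, fourierProj_pow_val_apply ψ hα, smul_smul, neg_sub,
    Complex.star_def, ← AddChar.map_neg_eq_conj, ← AddChar.map_add_eq_mul]
  apply Fintype.sum_equiv (Equiv.neg _)
  intro j
  simp only [Equiv.neg_apply, neg_neg]
  ring_nf

end FourierProjection

theorem stmt_11_general {A : Type*} [Ring A] [Algebra ℂ A] [StarRing A] [StarModule ℂ A]
    (n : ℕ) [NeZero n]
    (α : A ≃ₐ[ℂ] A) (hα : α ^ n = 1)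
    (hstar : ∀ x : A, α (star x) = star (α x))
    (ξ : ℂ) (hξ : IsPrimitiveRoot ξ n)
    (P : ZMod n → A → A)
    (hP : ∀ k x, P k x = (n : ℂ)⁻¹ • ∑ p ∈ Finset.range n, (ξ ^ (k.val * p))⁻¹ • (α ^ p) x)
    (θ : (ZMod n → A) → Matrix (ZMod n) (ZMod n) A)
    (hθ : ∀ a k l, θ a k l = ∑ i : ZMod n, (ξ ^ (i.val * l.val))⁻¹ • P (l - k) (a i))
    (a : ZMod n → A) :
    θ (fun j => (α ^ j.val) (star (a (-j)))) = (θ a).conjTranspose := by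
  set ψ := AddChar.zmodChar n hξ.pow_eq_one
  have hP' : P = fourierProj α ψ := by
    funext k x
    simp only [hP, fourierProj, sum_range_eq_sum_zmod_val n, AddChar.zmodChar_neg_mul, ψ]
  have hθ' : ∀ b, θ b = crossedToMatrix α ψ b := fun b => by
    ext k l
    simp only [hθ, hP', crossedToMatrix, Matrix.of_apply, AddChar.zmodChar_neg_mul, ψ]
  rw [hθ', hθ', crossedToMatrix_star ψ hα hstar]

theorem stmt_11 {A : Type*} [Ring A] [Algebra ℂ A] [StarRing A] [StarModule ℂ A]
    (n : ℕ) [NeZero n] (hn : 2 ≤ n)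
    (α : A ≃ₐ[ℂ] A) (hα : α ^ n = 1)
    (hstar : ∀ x : A, α (star x) = star (α x))
    (ξ : ℂ) (hξ : IsPrimitiveRoot ξ n)
    (P : ZMod n → A → A)
    (hP : ∀ k x, P k x = (n : ℂ)⁻¹ • ∑ p ∈ Finset.range n, (ξ ^ (k.val * p))⁻¹ • (α ^ p) x)
    (θ : (ZMod n → A) → Matrix (ZMod n) (ZMod n) A)
    (hθ : ∀ a k l, θ a k l = ∑ i : ZMod n, (ξ ^ (i.val * l.val))⁻¹ • P (l - k) (a i))
    (a : ZMod n → A) :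
    θ (fun j => (α ^ j.val) (star (a (-j)))) = (θ a).conjTranspose :=
  stmt_11_general n α hα hstar ξ hξ P hP θ hθ a
end

section
/- For each k with 0 ≤ k ≤ n-2, the set J_k of matrices in B_k whose (0,0)-entry lies in I_k (and whose (i,j)-entry lies in A_{j-i} otherwise) is a two-sided ideal of B_k, where B_k is the algebra of (n-k)×(n-k) matrices with (i,j)-entry in A_{j-i mod n} and I_k = ∑_{i=1}^{n-1-k} A_i A_{n-i} (closed linear span of such products) is a two-sided ideal of A_0. -/
theorem stmt_13 {A : Type*} [NormedRing A] [StarRing A] [CStarRing A]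
    [NormedAlgebra ℂ A] [StarModule ℂ A] [CompleteSpace A]
    (n : ℕ) [NeZero n] (hn : 2 ≤ n)
    (α : A ≃ₐ[ℂ] A) (hα : α ^ n = 1)
    (hstar : ∀ x : A, α (star x) = star (α x))
    (ξ : ℂ) (hξ : IsPrimitiveRoot ξ n)
    (Ak : ZMod n → Set A) (hAk : ∀ m, Ak m = {x : A | α x = ξ ^ m.val • x})
    (k : ℕ) (hk : k ≤ n - 2)
    (Ik : Set A)
    (hIk : Ik = closure ↑(Submodule.span ℂ
      {z : A | ∃ i ∈ Finset.Icc 1 (n - 1 - k), ∃ x ∈ Ak (i : ZMod n),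
        ∃ y ∈ Ak ((n - i : ℕ) : ZMod n), z = x * y}))
    (Bk : Set (Matrix (Fin (n - k)) (Fin (n - k)) A))
    (hBk : Bk = {M | ∀ (i j : Fin (n - k)), M i j ∈ Ak (((j : ℕ) : ZMod n) - ((i : ℕ) : ZMod n))})
    (Jk : Set (Matrix (Fin (n - k)) (Fin (n - k)) A))
    (hJk : Jk = {M ∈ Bk | M ⟨0, by omega⟩ ⟨0, by omega⟩ ∈ Ik}) :
    (∀ a ∈ Ak 0, ∀ x ∈ Ik, a * x ∈ Ik ∧ x * a ∈ Ik) ∧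
      Jk ⊆ Bk ∧
      ∀ M ∈ Bk, ∀ N ∈ Jk, M * N ∈ Jk ∧ N * M ∈ Jk := by
  classical
  have hn0 : 0 < n := Nat.pos_of_ne_zero (NeZero.ne n)
  have hmem : ∀ (m : ZMod n) (x : A), x ∈ Ak m ↔ α x = ξ ^ m.val • x := by
    intro m x; rw [hAk]; exact Iff.rfl
  have hzero : ∀ m : ZMod n, (0 : A) ∈ Ak m := by
    intro m; rw [hmem]; simp
  have hadd : ∀ (m : ZMod n) (x y : A), x ∈ Ak m → y ∈ Ak m → x + y ∈ Ak m := by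
    intro m x y hx hy
    rw [hmem] at hx hy ⊢
    rw [map_add, hx, hy, smul_add]
  have hpow : ∀ m : ℕ, ξ ^ m = ξ ^ (m % n) := by
    intro m
    conv_lhs => rw [← Nat.mod_add_div m n]
    rw [pow_add, pow_mul, hξ.pow_eq_one, one_pow, mul_one]
  have hmul : ∀ (a b : ZMod n) (x y : A), x ∈ Ak a → y ∈ Ak b → x * y ∈ Ak (a + b) := by
    intro a b x y hx hy
    rw [hmem] at hx hy ⊢
    rw [map_mul, hx, hy, smul_mul_smul_comm, ← pow_add, ZMod.val_add, ← hpow]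
  have hA0 : ∀ a : A, a ∈ Ak 0 ↔ α a = a := by
    intro a; rw [hmem]; simp [ZMod.val_zero]
  set S : Set A := {z : A | ∃ i ∈ Finset.Icc 1 (n - 1 - k), ∃ x ∈ Ak (i : ZMod n),
        ∃ y ∈ Ak ((n - i : ℕ) : ZMod n), z = x * y} with hSdef
  set T : Submodule ℂ A := Submodule.span ℂ S with hTdef
  have hIkT : Ik = closure (T : Set A) := hIk
  have hmapsL : ∀ a, a ∈ Ak 0 → ∀ x ∈ T, a * x ∈ T := by
    intro a ha x hx
    induction hx using Submodule.span_induction with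
    | mem z hz =>
      obtain ⟨i, hi, u, hu, v, hv, rfl⟩ := hz
      rw [← mul_assoc]
      exact Submodule.subset_span ⟨i, hi, a * u, by simpa using hmul 0 i a u ha hu, v, hv, rfl⟩
    | zero => simp
    | add y z _ _ hy hz => rw [mul_add]; exact T.add_mem hy hz
    | smul c y _ hy => rw [mul_smul_comm]; exact T.smul_mem c hy
  have hmapsR : ∀ a, a ∈ Ak 0 → ∀ x ∈ T, x * a ∈ T := by
    intro a ha x hx
    induction hx using Submodule.span_induction with
    | mem z hz =>
      obtain ⟨i, hi, u, hu, v, hv, rfl⟩ := hz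
      rw [mul_assoc]
      exact Submodule.subset_span ⟨i, hi, u, hu, v * a, by simpa using hmul _ 0 v a hv ha, rfl⟩
    | zero => simp
    | add y z _ _ hy hz => rw [add_mul]; exact T.add_mem hy hz
    | smul c y _ hy => rw [smul_mul_assoc]; exact T.smul_mem c hy
  have hIdeal : ∀ a ∈ Ak 0, ∀ x ∈ Ik, a * x ∈ Ik ∧ x * a ∈ Ik := by
    intro a ha x hx
    rw [hIkT] at hx ⊢
    constructor
    · exact map_mem_closure (f := fun y => a * y) (continuous_const.mul continuous_id)
        hx (fun y hy => hmapsL a ha y hy)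
    · exact map_mem_closure (f := fun y => y * a) (continuous_id.mul continuous_const)
        hx (fun y hy => hmapsR a ha y hy)
  have hTc : Ik = (T.topologicalClosure : Set A) := by
    rw [Submodule.topologicalClosure_coe]; exact hIkT
  have hsum : ∀ (f : Fin (n - k) → A), (∀ l, f l ∈ Ik) → (∑ l, f l) ∈ Ik := by
    intro f hf
    rw [hTc]
    exact Submodule.sum_mem _ (fun l _ => by rw [hTc] at hf; exact hf l)
  have hBmul : ∀ M ∈ Bk, ∀ N ∈ Bk, M * N ∈ Bk := by
    intro M hM N hN
    rw [hBk] at hM hN ⊢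
    intro i j
    rw [Matrix.mul_apply]
    refine Finset.sum_induction _ (fun x => x ∈ Ak _) (fun a b => hadd _ a b) (hzero _) ?_
    intro l _
    have h := hmul _ _ _ _ (hM i l) (hN l j)
    have e : (((l : ℕ) : ZMod n) - ((i : ℕ) : ZMod n)) + (((j : ℕ) : ZMod n) - ((l : ℕ) : ZMod n))
        = ((j : ℕ) : ZMod n) - ((i : ℕ) : ZMod n) := by ring
    rwa [e] at h
  refine ⟨hIdeal, ?_, ?_⟩
  · rw [hJk]; exact fun M hM => hM.1
  · intro M hM N hN
    rw [hJk] at hN ⊢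
    obtain ⟨hNB, hN0⟩ := hN
    set z0 : Fin (n - k) := ⟨0, by omega⟩ with hz0
    have hMB := hM; rw [hBk] at hMB
    have hNB' := hNB; rw [hBk] at hNB'
    have hz0v : ((z0 : ℕ) : ZMod n) = 0 := by simp [hz0]
    have hM00 : M z0 z0 ∈ Ak 0 := by
      have := hMB z0 z0; rwa [hz0v, sub_zero] at this
    have hN00' : N z0 z0 ∈ Ak 0 := by
      have := hNB' z0 z0; rwa [hz0v, sub_zero] at this
    have hgen : ∀ (l : Fin (n - k)), l ≠ z0 → ∀ (u v : A),
        u ∈ Ak (((l : ℕ) : ZMod n) - ((z0 : ℕ) : ZMod n)) →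
        v ∈ Ak (((z0 : ℕ) : ZMod n) - ((l : ℕ) : ZMod n)) → u * v ∈ Ik := by
      intro l hl u v hu hv
      have hi1 : 1 ≤ (l : ℕ) := by
        rcases Nat.eq_zero_or_pos (l : ℕ) with h | h
        · exact absurd (Fin.ext h) hl
        · exact h
      have hi2 : (l : ℕ) ≤ n - 1 - k := by have := l.isLt; omega
      have hle : (l : ℕ) ≤ n := by have := l.isLt; omega
      have hu' : u ∈ Ak (((l : ℕ) : ZMod n)) := by rwa [hz0v, sub_zero] at hu
      have hv' : v ∈ Ak ((((n - (l : ℕ) : ℕ)) : ZMod n)) := by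
        have e : (((n - (l : ℕ) : ℕ)) : ZMod n)
            = ((z0 : ℕ) : ZMod n) - ((l : ℕ) : ZMod n) := by
          rw [Nat.cast_sub hle, ZMod.natCast_self, hz0v]
        rw [e]; exact hv
      rw [hIkT]
      exact subset_closure (Submodule.subset_span
        ⟨(l : ℕ), Finset.mem_Icc.mpr ⟨hi1, hi2⟩, u, hu', v, hv', rfl⟩)
    constructor
    · refine ⟨hBmul M hM N hNB, ?_⟩
      rw [Matrix.mul_apply]
      refine hsum _ (fun l => ?_)
      by_cases hl : l = z0
      · subst hl; exact (hIdeal (M z0 z0) hM00 (N z0 z0) hN0).1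
      · exact hgen l hl _ _ (hMB z0 l) (hNB' l z0)
    · refine ⟨hBmul N hNB M hM, ?_⟩
      rw [Matrix.mul_apply]
      refine hsum _ (fun l => ?_)
      by_cases hl : l = z0
      · subst hl; exact (hIdeal (M z0 z0) hM00 (N z0 z0) hN0).2
      · exact hgen l hl _ _ (hNB' z0 l) (hMB l z0)
end

section
/- If (e_m) is an approximate unit for I_k, then e_m a → a for every a ∈ A_i with 1 ≤ i ≤ n-1-k, using the estimate ‖e_m a − a‖² = ‖e_m a a* e_m − e_m a a* − a a* e_m + a a*‖ and the fact that a a* ∈ I_k. -/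
/-!
The closed span `I_k` of the products `A_i A_{n-i}` is closed under multiplication (the middle
factor of `x y x' y'` lies again in `A_{n-i}` because `ξ ^ n = 1`) and under adjoints, so it is a
closed *-subalgebra. Hence with `a a*` it also contains `c = (a a*)^{1/2}`. As
`(x a)(x a)* = x (a a*) x* = (x c)(x c)*`, the C*-identity gives
`‖e a - a‖ = ‖(e - 1) a‖ = ‖(e - 1) c‖ = ‖e c - c‖ → 0`; passing to `c` avoids needing the
approximate unit to be bounded.
-/

theorem Complex.star_pow_eq_pow_sub {ξ : ℂ} {n i : ℕ} (hξ : ξ ^ n = 1) (hi : i ≤ n) (hn : n ≠ 0) :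
    star (ξ ^ i) = ξ ^ (n - i) := by
  have hnorm : ‖ξ ^ i‖ = 1 := by rw [norm_pow, Complex.norm_eq_one_of_pow_eq_one hξ hn, one_pow]
  rw [Complex.star_def, ← Complex.inv_eq_conj hnorm]
  refine (eq_inv_of_mul_eq_one_right ?_).symm
  rw [← pow_add, Nat.add_sub_cancel' hi, hξ]

section Eigenvectors

variable {A : Type*} [Ring A] [Algebra ℂ A]

theorem AlgEquiv.apply_mul_of_eigen (α : A ≃ₐ[ℂ] A) {x y : A} {c d : ℂ}
    (hx : α x = c • x) (hy : α y = d • y) : α (x * y) = (c * d) • (x * y) := by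
  rw [map_mul, hx, hy, smul_mul_smul_comm]

/-- The generators `A_i A_{n-i}`, `1 ≤ i ≤ m`, of the ideal `I_{n-1-m}`. -/
def eigenProducts (α : A ≃ₐ[ℂ] A) (ξ : ℂ) (n m : ℕ) : Set A :=
  {z | ∃ i ∈ Finset.Icc 1 m, ∃ x, α x = ξ ^ i • x ∧ ∃ y, α y = ξ ^ (n - i) • y ∧ z = x * y}

variable {α : A ≃ₐ[ℂ] A} {ξ : ℂ} {n m : ℕ}

theorem mul_mem_eigenProducts (hξ : ξ ^ n = 1) (hm : m ≤ n) {z w : A}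
    (hz : z ∈ eigenProducts α ξ n m) (hw : w ∈ eigenProducts α ξ n m) :
    z * w ∈ eigenProducts α ξ n m := by
  obtain ⟨i, hi, x, hx, y, hy, rfl⟩ := hz
  obtain ⟨j, hj, x', hx', y', hy', rfl⟩ := hw
  have hjn : ξ ^ j * ξ ^ (n - j) = 1 := by
    rw [← pow_add, Nat.add_sub_cancel' ((Finset.mem_Icc.1 hj).2.trans hm), hξ]
  refine ⟨i, hi, x, hx, y * (x' * y'), ?_, by rw [mul_assoc]⟩
  rw [α.apply_mul_of_eigen hy (α.apply_mul_of_eigen hx' hy'), hjn, mul_one]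

variable [StarRing A] [StarModule ℂ A]

theorem AlgEquiv.apply_star_of_eigen (α : A ≃ₐ[ℂ] A) (hstar : ∀ x, α (star x) = star (α x))
    {x : A} {c : ℂ} (hx : α x = c • x) : α (star x) = star c • star x := by
  rw [hstar, hx, star_smul]

theorem star_mem_eigenProducts (hstar : ∀ x, α (star x) = star (α x)) (hξ : ξ ^ n = 1)
    (hm : m ≤ n) {z : A} (hz : z ∈ eigenProducts α ξ n m) : star z ∈ eigenProducts α ξ n m := by
  obtain ⟨i, hi, x, hx, y, hy, rfl⟩ := hz
  obtain ⟨hi1, him⟩ := Finset.mem_Icc.1 hi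
  have hin : i ≤ n := him.trans hm
  refine ⟨i, hi, star y, ?_, star x, ?_, star_mul x y⟩
  · rw [α.apply_star_of_eigen hstar hy, Complex.star_pow_eq_pow_sub hξ (n.sub_le i) (by omega),
      Nat.sub_sub_self hin]
  · rw [α.apply_star_of_eigen hstar hx, Complex.star_pow_eq_pow_sub hξ hin (by omega)]

theorem mul_star_mem_eigenProducts (hstar : ∀ x, α (star x) = star (α x)) (hξ : ξ ^ n = 1)
    (hm : m ≤ n) {i : ℕ} (hi1 : 1 ≤ i) (him : i ≤ m) {a : A} (ha : α a = ξ ^ i • a) :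
    a * star a ∈ eigenProducts α ξ n m := by
  refine ⟨i, Finset.mem_Icc.2 ⟨hi1, him⟩, a, ha, star a, ?_, rfl⟩
  rw [α.apply_star_of_eigen hstar ha, Complex.star_pow_eq_pow_sub hξ (him.trans hm) (by omega)]

end Eigenvectors

theorem NonUnitalStarAlgebra.coe_adjoin_of_mul_mem_of_star_mem {R A : Type*} [CommSemiring R]
    [StarRing R] [NonUnitalSemiring A] [StarRing A] [Module R A] [IsScalarTower R A A]
    [SMulCommClass R A A] [StarModule R A] {s : Set A} (hmul : ∀ x ∈ s, ∀ y ∈ s, x * y ∈ s)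
    (hstar : ∀ x ∈ s, star x ∈ s) : (adjoin R s : Set A) = Submodule.span R s := by
  have hunion : s ∪ star s = s := Set.union_eq_left.2 fun x hx ↦ by simpa using hstar _ hx
  have hclosure : (Subsemigroup.closure s : Set A) = s :=
    congrArg SetLike.coe (Subsemigroup.closure_eq ⟨s, fun hx hy ↦ hmul _ hx _ hy⟩)
  have := congrArg SetLike.coe (adjoin_eq_span (R := R) s)
  rwa [hunion, hclosure] at this

section CStarAlgebra

variable {A : Type*} [CStarAlgebra A]

theorem CStarRing.norm_mul_eq_of_mul_star_eq {a c : A} (h : a * star a = c * star c) (x : A) :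
    ‖x * a‖ = ‖x * c‖ := by
  have hsq : ‖x * a‖ * ‖x * a‖ = ‖x * c‖ * ‖x * c‖ := by
    simp only [← CStarRing.norm_self_mul_star, star_mul, mul_assoc, ← mul_assoc a, h]
  exact (mul_self_inj (norm_nonneg _) (norm_nonneg _)).1 hsq

theorem exists_mem_mul_star_eq {S : NonUnitalStarSubalgebra ℂ A} (hS : IsClosed (S : Set A))
    {a : A} (ha : a * star a ∈ S) : ∃ c ∈ S, a * star a = c * star c := by
  let : PartialOrder A := CStarAlgebra.spectralOrder A
  have : StarOrderedRing A := CStarAlgebra.spectralOrderedRing A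
  have hb : 0 ≤ a * star a := mul_star_self_nonneg a
  refine ⟨CFC.sqrt (a * star a), ?_, ?_⟩
  · rw [CFC.sqrt_eq_real_sqrt _ hb]
    exact cfcₙ_mem (hs := hS) (𝕜' := ℂ) _ ha
  · rw [(CFC.sqrt_nonneg (a * star a)).isSelfAdjoint.star_eq, CFC.sqrt_mul_sqrt_self _ hb]

end CStarAlgebra

theorem stmt_17_general {A : Type*} [NormedRing A] [StarRing A] [CStarRing A]
    [NormedAlgebra ℂ A] [StarModule ℂ A] [CompleteSpace A]
    (n : ℕ)
    (α : A ≃ₐ[ℂ] A)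
    (hstar : ∀ x : A, α (star x) = star (α x))
    (ξ : ℂ) (hξ : IsPrimitiveRoot ξ n)
    (Ak : ℕ → Set A) (hAk : ∀ k, Ak k = {x : A | α x = ξ ^ k • x})
    (k : ℕ)
    (Ik : Set A)
    (hIk : Ik = closure ↑(Submodule.span ℂ
      {z : A | ∃ i ∈ Finset.Icc 1 (n - 1 - k), ∃ x ∈ Ak i,
        ∃ y ∈ Ak (n - i), z = x * y}))
    {ι : Type*} (F : Filter ι) (e : ι → A)
    (happrox : ∀ x ∈ Ik,
      Filter.Tendsto (fun γ => e γ * x) F (nhds x) ∧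
      Filter.Tendsto (fun γ => x * e γ) F (nhds x))
    (i : ℕ) (hi1 : 1 ≤ i) (hi2 : i ≤ n - 1 - k)
    (a : A) (ha : a ∈ Ak i) :
    Filter.Tendsto (fun γ => e γ * a) F (nhds a) := by
  let _ : CStarAlgebra A := {}
  obtain rfl : Ak = fun k ↦ {x : A | α x = ξ ^ k • x} := funext hAk
  have hm : n - 1 - k ≤ n := by omega
  set G := eigenProducts α ξ n (n - 1 - k)
  set S := (NonUnitalStarAlgebra.adjoin ℂ G).topologicalClosure
  have hIkS : Ik = S := by
    change Ik = closure (NonUnitalStarAlgebra.adjoin ℂ G : Set A)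
    rw [NonUnitalStarAlgebra.coe_adjoin_of_mul_mem_of_star_mem
      (fun _ hx _ hy ↦ mul_mem_eigenProducts hξ.pow_eq_one hm hx hy)
      (fun _ hx ↦ star_mem_eigenProducts hstar hξ.pow_eq_one hm hx), hIk]
    rfl
  obtain ⟨c, hcIk, hac⟩ : ∃ c ∈ Ik, a * star a = c * star c := by
    rw [hIkS]
    exact exists_mem_mul_star_eq (NonUnitalStarSubalgebra.isClosed_topologicalClosure _)
      (subset_closure (NonUnitalStarAlgebra.subset_adjoin ℂ G
        (mul_star_mem_eigenProducts hstar hξ.pow_eq_one hm hi1 hi2 ha)))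
  have hnorm : ∀ γ, ‖e γ * a - a‖ = ‖e γ * c - c‖ := fun γ ↦ by
    simpa only [sub_one_mul, one_mul] using CStarRing.norm_mul_eq_of_mul_star_eq hac (e γ - 1)
  rw [tendsto_iff_norm_sub_tendsto_zero]
  simpa only [hnorm] using tendsto_iff_norm_sub_tendsto_zero.1 (happrox c hcIk).1

theorem stmt_17 {A : Type*} [NormedRing A] [StarRing A] [CStarRing A]
    [NormedAlgebra ℂ A] [StarModule ℂ A] [CompleteSpace A]
    (n : ℕ) (hn : 2 ≤ n)
    (α : A ≃ₐ[ℂ] A) (hα : α ^ n = 1)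
    (hstar : ∀ x : A, α (star x) = star (α x))
    (ξ : ℂ) (hξ : IsPrimitiveRoot ξ n)
    (Ak : ℕ → Set A) (hAk : ∀ k, Ak k = {x : A | α x = ξ ^ k • x})
    (k : ℕ) (hk : k ≤ n - 2)
    (Ik : Set A)
    (hIk : Ik = closure ↑(Submodule.span ℂ
      {z : A | ∃ i ∈ Finset.Icc 1 (n - 1 - k), ∃ x ∈ Ak i,
        ∃ y ∈ Ak (n - i), z = x * y}))
    {ι : Type*} (F : Filter ι) [F.NeBot] (e : ι → A)
    (he : ∀ γ, e γ ∈ Ik)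
    (happrox : ∀ x ∈ Ik,
      Filter.Tendsto (fun γ => e γ * x) F (nhds x) ∧
      Filter.Tendsto (fun γ => x * e γ) F (nhds x))
    (i : ℕ) (hi1 : 1 ≤ i) (hi2 : i ≤ n - 1 - k)
    (a : A) (ha : a ∈ Ak i) :
    Filter.Tendsto (fun γ => e γ * a) F (nhds a) :=
  stmt_17_general n α hstar ξ hξ Ak hAk k Ik hIk F e happrox i hi1 hi2 a ha
end
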